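/- arXiv:1808.02560 — 3 statements merged into one kernel-verified Lean document; each statement's English description precedes it below -/
import Mathlib

section
/- For belief functions on binary frames Xᵢ = {T,F}, under conjunctive combination the belief of any Cartesian product event factorises: Bel_{X₁ × ⋯ × Xₙ}(A₁ × ⋯ × Aₙ) = ∏ᵢ Bel_{Xᵢ}(Aᵢ) for all nonempty Aᵢ ⊆ Xᵢ. -/
open scoped Classical

/-- for belief functions on binary frames Xᵢ = {T,F} (`Bool`), under
conjunctive combination the belief of any Cartesian product of nonempty events
factorises into the product of the individual beliefs. -/
theorem stmt_4 (n : ℕ)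
    (m : Fin n → Finset Bool → ℝ)
    (he : ∀ i, m i ∅ = 0)
    (hs : ∀ i, ∑ A : Finset Bool, m i A = 1)
    (hnn : ∀ i (A : Finset Bool), 0 ≤ m i A)
    (mConj : Finset (Fin n → Bool) → ℝ)
    (hConj : ∀ S, mConj S =
      ∑ B : (∀ _ : Fin n, Finset Bool),
        if Fintype.piFinset B = S then ∏ i, m i (B i) else 0)
    (Bel : Finset (Fin n → Bool) → ℝ)
    (hBel : ∀ A, Bel A = ∑ S ∈ A.powerset, mConj S)
    (BelX : Fin n → Finset Bool → ℝ)
    (hBelX : ∀ i (A : Finset Bool), BelX i A = ∑ B ∈ A.powerset, m i B)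
    (A : Fin n → Finset Bool) (hA : ∀ i, (A i).Nonempty) :
    Bel (Fintype.piFinset A) = ∏ i, BelX i (A i) := by
  classical
  have key : ∀ B : Fin n → Finset Bool,
      (if Fintype.piFinset B ⊆ Fintype.piFinset A then ∏ i, m i (B i) else 0)
        = if ∀ i, B i ⊆ A i then ∏ i, m i (B i) else 0 := by
    intro B
    by_cases hall : ∀ i, (B i).Nonempty
    · have hiff : (Fintype.piFinset B ⊆ Fintype.piFinset A) ↔ ∀ i, B i ⊆ A i := by
        constructor
        · intro h j x hx
          choose g hg using hall
          set F : Fin n → Bool := fun i => if h : i = j then x else g i with hFdef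
          have hF : F ∈ Fintype.piFinset B := by
            rw [Fintype.mem_piFinset]
            intro i
            by_cases hij : i = j
            · subst hij; simpa [hFdef] using hx
            · simpa [hFdef, hij] using hg i
          have hmem := h hF
          rw [Fintype.mem_piFinset] at hmem
          have := hmem j
          simpa [hFdef] using this
        · intro h f hf
          rw [Fintype.mem_piFinset] at hf ⊢
          exact fun i => h i (hf i)
      exact if_congr hiff rfl rfl
    · push_neg at hall
      obtain ⟨i, hi⟩ := hall
      have hz : ∏ j, m j (B j) = 0 :=
        Finset.prod_eq_zero (Finset.mem_univ i) (by rw [hi, he])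
      simp [hz]
  rw [hBel]
  simp_rw [hConj]
  rw [Finset.sum_comm]
  have h1 : ∀ B : Fin n → Finset Bool,
      (∑ S ∈ (Fintype.piFinset A).powerset,
        (if Fintype.piFinset B = S then ∏ i, m i (B i) else 0))
        = if ∀ i, B i ⊆ A i then ∏ i, m i (B i) else 0 := by
    intro B
    rw [Finset.sum_ite_eq]
    simpa [Finset.mem_powerset] using key B
  rw [Finset.sum_congr rfl (fun B _ => h1 B)]
  have h2 : ∀ i, BelX i (A i) = ∑ C ∈ (A i).powerset, m i C := fun i => hBelX i (A i)
  rw [Finset.prod_congr rfl (fun i _ => h2 i), Finset.prod_univ_sum]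
  rw [← Finset.sum_filter]
  apply Finset.sum_congr
  · ext B
    simp [Fintype.mem_piFinset, Finset.mem_powerset]
  · intros; rfl
end

section
/- For any n ≥ 2, the disjunctive combination of n belief functions on binary frames Xᵢ = {T,F} (each with focal elements {T}, {F}, Xᵢ), vacuously extended to X₁ × ⋯ × Xₙ, has 2ⁿ + 1 focal elements: all complements {(x₁,...,xₙ)}ᶜ of singleton tuples, with mass m({(x₁,...,xₙ)}ᶜ) = ∏ᵢ m_{Xᵢ}({xᵢ}ᶜ), plus the full product X₁ × ⋯ × Xₙ with the remaining mass. -/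
open scoped Classical

/-- for n ≥ 2, the disjunctive combination of n belief functions on binary
frames (each with focal elements {T}, {F}, X), vacuously extended to the n-fold product,
has 2ⁿ + 1 focal elements: the complements {x}ᶜ of singleton tuples, with mass
∏ᵢ mᵢ({xᵢ}ᶜ), plus the full product with the remaining mass. -/
theorem stmt_9 (n : ℕ) (hn : 2 ≤ n)
    (m : Fin n → Finset Bool → ℝ)
    (he : ∀ i, m i ∅ = 0)
    (hs : ∀ i, ∑ A : Finset Bool, m i A = 1)
    (hpos : ∀ i (A : Finset Bool), A.Nonempty → 0 < m i A)
    (mDisj : Finset (Fin n → Bool) → ℝ)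
    (hDisj : ∀ S, mDisj S =
      ∑ B : (∀ _ : Fin n, Finset Bool),
        if (Finset.univ.filter fun f : Fin n → Bool => ∃ i, f i ∈ B i) = S
        then ∏ i, m i (B i) else 0) :
    (∀ x : Fin n → Bool, mDisj ({x}ᶜ) = ∏ i, m i ({x i}ᶜ))
    ∧ mDisj Finset.univ = 1 - ∑ x : Fin n → Bool, ∏ i, m i ({x i}ᶜ)
    ∧ (Finset.univ.filter (fun S : Finset (Fin n → Bool) => mDisj S ≠ 0)).card = 2 ^ n + 1
    ∧ (∀ S, mDisj S ≠ 0 → S = Finset.univ ∨ ∃ x : Fin n → Bool, S = {x}ᶜ) := by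
  classical
  have hne : Nonempty (Fin n) := ⟨⟨0, by omega⟩⟩
  set U : (Fin n → Finset Bool) → Finset (Fin n → Bool) :=
    fun B => Finset.univ.filter fun f : Fin n → Bool => ∃ i, f i ∈ B i with hUdef
  set F : (Fin n → Bool) → (Fin n → Finset Bool) := fun x i => {x i}ᶜ with hFdef
  have hDisj' : ∀ S, mDisj S = ∑ B : (Fin n → Finset Bool),
      if U B = S then ∏ i, m i (B i) else 0 := hDisj
  have hboolcompl : ∀ c : Bool, ({c}ᶜ : Finset Bool) = {!c} := by decide
  have hmnonneg : ∀ i A, 0 ≤ m i A := by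
    intro i A
    rcases A.eq_empty_or_nonempty with h | h
    · simp [h, he]
    · exact (hpos i A h).le
  have hprodnonneg : ∀ B : Fin n → Finset Bool, 0 ≤ ∏ i, m i (B i) :=
    fun B => Finset.prod_nonneg fun i _ => hmnonneg i (B i)
  have hFinj : Function.Injective F := by
    intro x y h
    funext i
    have := congrFun h i
    simp only [hFdef] at this
    have := compl_injective this
    simpa using this
  have hUF : ∀ x, U (F x) = {x}ᶜ := by
    intro x
    ext f
    simp [hUdef, hFdef, Function.ne_iff]
  -- classification of tuples with nonzero product
  have hclass : ∀ B : Fin n → Finset Bool, (∏ i, m i (B i)) ≠ 0 →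
      U B = Finset.univ ∨ ∃ x, B = F x := by
    intro B hB
    have hne' : ∀ i, (B i).Nonempty := by
      intro i
      rcases (B i).eq_empty_or_nonempty with h | h
      · exact absurd (Finset.prod_eq_zero (Finset.mem_univ i) (by rw [h, he])) hB
      · exact h
    by_cases huniv : ∃ i, B i = Finset.univ
    · left
      obtain ⟨i, hi⟩ := huniv
      ext f
      simp only [hUdef, Finset.mem_filter, Finset.mem_univ, true_and, iff_true]
      exact ⟨i, by simp [hi]⟩
    · right
      push_neg at huniv
      -- each B i is a singleton
      have hsing : ∀ i, ∃ b : Bool, B i = {b} := by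
        intro i
        obtain ⟨b, hb⟩ := hne' i
        refine ⟨b, ?_⟩
        ext c
        simp only [Finset.mem_singleton]
        constructor
        · intro hc
          by_contra hne2
          apply huniv i
          ext d
          simp only [Finset.mem_univ, iff_true]
          cases d <;> cases b <;> cases c <;> simp_all
        · rintro rfl; exact hb
      choose b hb using hsing
      refine ⟨fun i => !(b i), ?_⟩
      funext i
      rw [hb i]
      simp [hFdef, hboolcompl]
  have hsingne : ∀ x : Fin n → Bool, ({x}ᶜ : Finset (Fin n → Bool)) ≠ Finset.univ := by
    intro x h
    have : x ∈ ({x}ᶜ : Finset (Fin n → Bool)) := h ▸ Finset.mem_univ x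
    simp at this
  -- Part 1
  have h1 : ∀ x : Fin n → Bool, mDisj ({x}ᶜ) = ∏ i, m i ({x i}ᶜ) := by
    intro x
    rw [hDisj']
    rw [Finset.sum_eq_single (F x)]
    · rw [if_pos (hUF x)]
    · intro B _ hBne
      by_cases hc : U B = {x}ᶜ
      · rw [if_pos hc]
        by_contra hB0
        rcases hclass B hB0 with h | ⟨y, rfl⟩
        · exact hsingne x (hc ▸ h)
        · apply hBne
          have := (hUF y).symm.trans hc
          have := compl_injective this
          exact congrArg F (Finset.singleton_injective this)
      · rw [if_neg hc]
    · intro h; exact absurd (Finset.mem_univ _) h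
  -- total mass is 1
  have htot : ∑ B : (Fin n → Finset Bool), ∏ i, m i (B i) = 1 := by
    rw [← Fintype.prod_sum]
    simp [hs]
  -- Part 2
  have h2 : mDisj Finset.univ = 1 - ∑ x : Fin n → Bool, ∏ i, m i ({x i}ᶜ) := by
    have hsplit : (∑ B : (Fin n → Finset Bool), ∏ i, m i (B i)) =
        mDisj Finset.univ +
          ∑ B : (Fin n → Finset Bool), if U B = Finset.univ then 0 else ∏ i, m i (B i) := by
      rw [hDisj', ← Finset.sum_add_distrib]
      apply Finset.sum_congr rfl
      intro B _
      by_cases hc : U B = Finset.univ <;> simp [hc]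
    have hrest : (∑ B : (Fin n → Finset Bool),
        if U B = Finset.univ then 0 else ∏ i, m i (B i)) =
        ∑ x : Fin n → Bool, ∏ i, m i ({x i}ᶜ) := by
      have step1 : (∑ B : (Fin n → Finset Bool),
          if U B = Finset.univ then 0 else ∏ i, m i (B i)) =
          ∑ B : (Fin n → Finset Bool),
            if B ∈ Finset.univ.image F then ∏ i, m i (B i) else 0 := by
        apply Finset.sum_congr rfl
        intro B _
        by_cases hB0 : (∏ i, m i (B i)) = 0
        · split_ifs <;> simp [hB0]
        · rcases hclass B hB0 with h | ⟨x, rfl⟩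
          · rw [if_pos h, if_neg]
            rintro hmem
            simp only [Finset.mem_image, Finset.mem_univ, true_and] at hmem
            obtain ⟨x, rfl⟩ := hmem
            exact hsingne x ((hUF x).symm.trans h)
          · rw [if_neg, if_pos (Finset.mem_image_of_mem F (Finset.mem_univ x))]
            rw [hUF x]
            exact hsingne x
      rw [step1, Finset.sum_ite_mem, Finset.univ_inter,
        Finset.sum_image (fun x _ y _ h => hFinj h)]
    rw [htot, hrest] at hsplit
    linarith
  -- positivity
  have hxpos : ∀ x : Fin n → Bool, 0 < mDisj ({x}ᶜ) := by
    intro x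
    rw [h1 x]
    apply Finset.prod_pos
    intro i _
    apply hpos
    exact ⟨!(x i), by simp [hboolcompl]⟩
  have hupos : 0 < mDisj Finset.univ := by
    rw [hDisj']
    apply Finset.sum_pos' (fun B _ => by split_ifs <;> [exact hprodnonneg B; rfl])
    refine ⟨fun _ => Finset.univ, Finset.mem_univ _, ?_⟩
    rw [if_pos]
    · exact Finset.prod_pos fun i _ => hpos i _ ⟨true, Finset.mem_univ _⟩
    · ext f
      simp only [hUdef, Finset.mem_filter, Finset.mem_univ, true_and, iff_true]
      exact ⟨Classical.arbitrary (Fin n), trivial⟩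
  -- Part 4
  have h4 : ∀ S, mDisj S ≠ 0 → S = Finset.univ ∨ ∃ x : Fin n → Bool, S = {x}ᶜ := by
    intro S hS
    rw [hDisj'] at hS
    obtain ⟨B, _, hB⟩ := Finset.exists_ne_zero_of_sum_ne_zero hS
    by_cases hc : U B = S
    · rw [if_pos hc] at hB
      rcases hclass B hB with h | ⟨x, rfl⟩
      · exact Or.inl (hc.symm.trans h)
      · exact Or.inr ⟨x, ((hUF x).symm.trans hc).symm⟩
    · rw [if_neg hc] at hB; exact absurd rfl hB
  -- Part 3
  have h3 : (Finset.univ.filter (fun S : Finset (Fin n → Bool) => mDisj S ≠ 0)).card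
      = 2 ^ n + 1 := by
    have hset : Finset.univ.filter (fun S : Finset (Fin n → Bool) => mDisj S ≠ 0)
        = insert Finset.univ (Finset.univ.image fun x : Fin n → Bool => ({x}ᶜ :
            Finset (Fin n → Bool))) := by
      ext S
      simp only [Finset.mem_filter, Finset.mem_univ, true_and, Finset.mem_insert,
        Finset.mem_image]
      constructor
      · intro hS
        rcases h4 S hS with h | ⟨x, rfl⟩
        · exact Or.inl h
        · exact Or.inr ⟨x, rfl⟩
      · rintro (rfl | ⟨x, rfl⟩)
        · exact ne_of_gt hupos
        · exact ne_of_gt (hxpos x)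
    rw [hset, Finset.card_insert_of_notMem, Finset.card_image_of_injective _
        (fun x y h => Finset.singleton_injective (compl_injective h))]
    · simp [Nat.add_comm]
    · intro hmem
      simp only [Finset.mem_image, Finset.mem_univ, true_and] at hmem
      obtain ⟨x, hx⟩ := hmem
      exact hsingne x hx
  exact ⟨h1, h2, h3, h4⟩
end

section
/- The disjunctive combination of belief functions multiplies belief values: (Bel₁ ⓤ Bel₂)(A) = Bel₁(A) · Bel₂(A) for all A ⊆ Θ, where Bel₁, Bel₂ are belief functions on the same finite frame Θ and ⓤ is the disjunctive rule. -/
open scoped Classical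

/-- disjunctive combination multiplies belief values:
(Bel₁ ⓤ Bel₂)(A) = Bel₁(A)·Bel₂(A) for all A ⊆ Θ. -/
theorem stmt_18 {Θ : Type} [Fintype Θ] [DecidableEq Θ]
    (m₁ m₂ : Finset Θ → ℝ)
    (h₁e : m₁ ∅ = 0) (h₂e : m₂ ∅ = 0)
    (h₁s : ∑ A : Finset Θ, m₁ A = 1) (h₂s : ∑ A : Finset Θ, m₂ A = 1)
    (h₁n : ∀ A, 0 ≤ m₁ A) (h₂n : ∀ A, 0 ≤ m₂ A)
    (mDisj : Finset Θ → ℝ)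
    (hDisj : ∀ S, mDisj S =
      ∑ B : Finset Θ, ∑ C : Finset Θ, if B ∪ C = S then m₁ B * m₂ C else 0)
    (Bel₁ Bel₂ BelDisj : Finset Θ → ℝ)
    (hBel₁ : ∀ A, Bel₁ A = ∑ B ∈ A.powerset, m₁ B)
    (hBel₂ : ∀ A, Bel₂ A = ∑ B ∈ A.powerset, m₂ B)
    (hBelDisj : ∀ A, BelDisj A = ∑ S ∈ A.powerset, mDisj S)
    (A : Finset Θ) :
    BelDisj A = Bel₁ A * Bel₂ A := by
  have hpow : Finset.univ.filter (fun B : Finset Θ => B ⊆ A) = A.powerset := by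
    ext B; simp
  simp only [hBelDisj, hDisj, hBel₁, hBel₂]
  rw [Finset.sum_comm]
  have swap : ∀ B : Finset Θ, (∑ S ∈ A.powerset, ∑ C : Finset Θ, if B ∪ C = S then m₁ B * m₂ C else 0) = ∑ C : Finset Θ, ∑ S ∈ A.powerset, if B ∪ C = S then m₁ B * m₂ C else 0 := by intro B; rw [Finset.sum_comm]
  simp only [swap]
  have key : ∀ B C : Finset Θ,
      (∑ S ∈ A.powerset, if B ∪ C = S then m₁ B * m₂ C else 0)
        = if B ⊆ A then (if C ⊆ A then m₁ B * m₂ C else 0) else 0 := by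
    intro B C
    rw [Finset.sum_ite_eq A.powerset (B ∪ C) (fun _ => m₁ B * m₂ C)]
    simp [Finset.mem_powerset, Finset.union_subset_iff, ite_and]
  simp only [key]
  rw [Finset.sum_mul_sum, ← hpow, Finset.sum_filter]
  refine Finset.sum_congr rfl fun B _ => ?_
  split
  · rw [Finset.sum_filter]
  · simp
end
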